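/- arXiv:1107.5033 — 4 statements merged into one kernel-verified Lean document; each statement's English description precedes it below -/
import Mathlib

section
/- The generalized Thue-Morse word t_{b,m} is periodic if b ≡ 1 (mod m); in that case t_{b,m} = (01...(m-1))^ω, the infinite periodic repetition of the word 01...(m-1). -/
open Filter Topology

/-- The prefix of length `n` of an infinite word `u`. -/
def pref {A : Type*} (u : ℕ → A) (n : ℕ) : List A :=
  (List.range n).map u

/-- `w` is a factor of the infinite word `u`. -/
def isFactor {A : Type*} (u : ℕ → A) (w : List A) : Prop :=
  ∃ i, w = (List.range w.length).map (fun j => u (i + j))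

/-- The number of occurrences of `w` in the finite word `v`. -/
def occ {A : Type*} [DecidableEq A] (w v : List A) : ℕ :=
  (List.range (v.length + 1)).countP (fun i => decide ((v.drop i).take w.length = w))

/-- The frequency of the factor `w` in the infinite word `u` is `r`. -/
def freq {A : Type*} [DecidableEq A] (u : ℕ → A) (w : List A) (r : ℝ) : Prop :=
  Tendsto (fun n => (occ w (pref u n) : ℝ) / n) atTop (𝓝 r)

/-- Image of the letter `k` under the generalized Thue–Morse morphism `φ_{b,m}`. -/
def phiL (b : ℕ) {m : ℕ} (k : ZMod m) : List (ZMod m) :=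
  (List.range b).map (fun i => k + (i : ZMod m))

/-- Extension of `φ_{b,m}` to finite words. -/
def phiW (b : ℕ) {m : ℕ} (s : List (ZMod m)) : List (ZMod m) :=
  s.flatMap (phiL b)

/-- `u` is the fixed point of `φ_{b,m}` starting in `0`. -/
def isTM (b m : ℕ) (u : ℕ → ZMod m) : Prop :=
  u 0 = 0 ∧ ∀ n i, i < b → u (b * n + i) = u n + (i : ZMod m)

/-- If `b ≡ 1 (mod m)`, then the generalized Thue–Morse word `t_{b,m}` is periodic and
equals `(01…(m-1))^ω`, i.e. its `n`-th letter is `n mod m`. -/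
theorem tm_periodic (b m : ℕ) (hb : 2 ≤ b) (hm : 1 ≤ m) (u : ℕ → ZMod m)
    (hu : isTM b m u) (hcong : (b : ZMod m) = 1) :
    (∀ n : ℕ, u n = (n : ZMod m)) ∧ (∃ p : ℕ, 0 < p ∧ ∀ n : ℕ, u (n + p) = u n) := by
  obtain ⟨h0, hrec⟩ := hu
  have key : ∀ n : ℕ, u n = (n : ZMod m) := by
    intro n
    induction n using Nat.strong_induction_on with
    | _ n ih =>
      rcases Nat.eq_zero_or_pos n with h | h
      · simpa [h] using h0
      · set q := n / b with hq
        set i := n % b with hi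
        have hib : i < b := Nat.mod_lt _ (by omega)
        have hn : b * q + i = n := by
          rw [hq, hi]; exact Nat.div_add_mod n b
        have hqlt : q < n := Nat.div_lt_self h (by omega)
        have := hrec q i hib
        rw [hn] at this
        rw [this, ih q hqlt]
        have : ((b * q + i : ℕ) : ZMod m) = (q : ZMod m) + (i : ZMod m) := by
          push_cast [hcong]; ring
        rw [← hn, this]
  refine ⟨key, m, hm, fun n => ?_⟩
  rw [key, key]
  push_cast
  simp
end

section
/- Every symmetry on A* is either a morphism or an antimorphism of A* whose restriction to A is a permutation of the alphabet; conversely, every morphism or antimorphism of A* restricting to a letter permutation is a symmetry. -/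
/-!
A symmetry preserves `occ [] v = |v| + 1`, hence lengths, so it maps letters to letters by a
permutation `π`, and counts of letters, so `Ψ v` is a permutation of `map π v`. After composing
with `map π⁻¹` the map fixes letters and, by a look at three-letter words, either fixes all
two-letter words or reverses all of them; in the second case compose with `reverse` as well.
A symmetry fixing all words of length at most two is the identity, by induction on length: for
`v = h :: s = p ++ [l]` the image `W` of `v` contains `p` and `s` and is a permutation of `v`,
so `W = v` unless `W = l :: p = s ++ [h]`. In that last case counting occurrences of `[l, h]`
gives `h = l`, whence `p ++ [h] = h :: p`, and again `W = v`.
-/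

open Filter Topology

/-- `Ψ` is a symmetry: a bijection of `A*` preserving numbers of occurrences. -/
def IsSymmetry {A : Type*} [DecidableEq A] (Ψ : List A → List A) : Prop :=
  Function.Bijective Ψ ∧ ∀ w v : List A, occ w v = occ (Ψ w) (Ψ v)

open scoped List

section Occurrences

variable {A : Type*} [DecidableEq A]

theorem occ_nil_right (w : List A) : occ w [] = if w = [] then 1 else 0 := by
  simp [occ, eq_comm]

theorem occ_cons (w : List A) (a : A) (v : List A) :
    occ w (a :: v) = occ w v + if w <+: a :: v then 1 else 0 := by
  simp only [occ, List.length_cons, List.range_succ_eq_map, List.countP_cons, List.countP_map]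
  simp [Function.comp_def, List.prefix_iff_eq_take, eq_comm]

theorem occ_nil_left (v : List A) : occ [] v = v.length + 1 := by
  induction v with
  | nil => simp [occ_nil_right]
  | cons a v ih => simp [occ_cons, ih]

theorem occ_singleton (a : A) (v : List A) : occ [a] v = v.count a := by
  induction v with
  | nil => simp [occ_nil_right]
  | cons b v ih => simp [occ_cons, ih, List.count_cons, @eq_comm _ b]

theorem occ_pos_iff_infix {w v : List A} : 0 < occ w v ↔ w <:+: v := by
  induction v with
  | nil => by_cases h : w = [] <;> simp [occ_nil_right, h]
  | cons a v ih => by_cases h : w <+: a :: v <;> simp [occ_cons, List.infix_cons_iff, ← ih, h]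

theorem occ_concat (w v : List A) (a : A) :
    occ w (v ++ [a]) = occ w v + if w <:+ v ++ [a] then 1 else 0 := by
  induction v with
  | nil => simp [occ_cons, occ_nil_right, List.prefix_cons_iff, List.suffix_cons_iff, or_comm]
  | cons b v ih =>
    rw [List.cons_append, occ_cons, ih, occ_cons]
    by_cases hw : w = b :: (v ++ [a])
    · subst hw
      have hsuf : ¬ b :: (v ++ [a]) <:+ v ++ [a] := fun h => by simpa using h.length_le
      have hpre : ¬ b :: (v ++ [a]) <+: b :: v := fun h => by simpa using h.length_le
      simp [hsuf, hpre]
    · have hpre : w <+: b :: v ++ [a] ↔ w <+: b :: v := by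
        rw [List.prefix_concat_iff, List.cons_append, or_iff_right hw]
      have hsuf : w <:+ b :: v ++ [a] ↔ w <:+ v ++ [a] := by
        rw [List.cons_append, List.suffix_cons_iff, or_iff_right hw]
      simp only [List.cons_append] at hpre hsuf
      simp only [hpre, hsuf]
      omega

theorem occ_reverse (w v : List A) : occ w.reverse v.reverse = occ w v := by
  induction v with
  | nil => simp [occ_nil_right]
  | cons a v ih =>
    rw [List.reverse_cons, occ_concat, ih, occ_cons]
    simp only [← List.reverse_cons, List.reverse_suffix]

theorem occ_map {B : Type*} [DecidableEq B] {f : A → B} (hf : Function.Injective f)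
    (w v : List A) :
    occ (w.map f) (v.map f) = occ w v := by
  simp only [occ, List.length_map, ← List.map_drop, ← List.map_take,
    (List.map_injective_iff.2 hf).eq_iff]

end Occurrences

namespace List

variable {A : Type*}

theorem eq_append_or_eq_cons_of_infix_of_perm {w W : List A} {x : A} (h : w <:+: W)
    (hperm : W ~ w ++ [x]) : W = w ++ [x] ∨ W = x :: w := by
  obtain ⟨s, t, rfl⟩ := h
  have hlen : s.length + t.length = 1 := by
    have := hperm.length_eq; simp at this; omega
  rcases s with _ | ⟨y, _ | ⟨_, _⟩⟩
  · obtain ⟨y, rfl⟩ := length_eq_one_iff.1 (by simpa using hlen)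
    have : y = x := by simpa using (perm_append_left_iff w).1 hperm
    simp [this]
  · obtain rfl : t = [] := length_eq_zero_iff.1 (by simpa using hlen)
    have : y = x := singleton_perm_singleton.1 <|
      (perm_append_left_iff w).1 ((perm_append_singleton y w).trans (by simpa using hperm))
    simp [this]
  · simp at hlen; omega

theorem append_singleton_eq_cons_of_append_pair_eq {a : A} :
    ∀ {p : List A}, p ++ [a, a] = a :: a :: p → p ++ [a] = a :: p
  | [], _ => rfl
  | b :: p, h => by
    simp only [cons_append, cons.injEq] at h
    obtain ⟨rfl, h⟩ := h
    simp [append_singleton_eq_cons_of_append_pair_eq h]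

end List

theorem eq_of_perm_of_infix_of_occ_pair_eq {A : Type*} [DecidableEq A] {h l : A}
    {p s W : List A} (hv : h :: s = p ++ [l]) (hperm : W ~ p ++ [l]) (hp : p <:+: W) (hs : s <:+: W)
    (hpair : ∀ c d, occ [c, d] W = occ [c, d] (p ++ [l])) : W = p ++ [l] := by
  have hperm' : W ~ s ++ [h] := hperm.trans (hv ▸ (List.perm_append_singleton h s).symm)
  rcases List.eq_append_or_eq_cons_of_infix_of_perm hp hperm with hW | hWp
  · exact hW
  rcases List.eq_append_or_eq_cons_of_infix_of_perm hs hperm' with hWs | hW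
  · -- `[l, h]` is a prefix of `W = l :: p`; in `p ++ [l]` it can only be the final factor.
    obtain rfl : h = l := by
      rcases p with _ | ⟨h', p'⟩
      · simp at hv; exact hv.1
      obtain rfl : h = h' := by simp at hv; exact hv.1
      have hsuf : [l, h] <:+ h :: p' ++ [l] := by
        have := hpair l h
        rw [hWp, occ_cons, occ_concat, if_pos (by simp)] at this
        by_contra hn
        rw [if_neg hn] at this
        omega
      exact (by simpa using hsuf.reverse : h = l ∧ _).1
    rw [hWp]
    refine (List.append_singleton_eq_cons_of_append_pair_eq ?_).symm
    calc p ++ [h, h] = h :: s ++ [h] := by rw [hv]; simp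
      _ = h :: h :: p := by rw [List.cons_append, ← hWs, hWp]
  · rw [hW, hv]

def PreservesOcc {A : Type*} [DecidableEq A] (Φ : List A → List A) : Prop :=
  ∀ w v : List A, occ w v = occ (Φ w) (Φ v)

theorem preservesOcc_id {A : Type*} [DecidableEq A] : PreservesOcc (id : List A → List A) :=
  fun _ _ => rfl

namespace PreservesOcc

variable {A : Type*} [DecidableEq A] {Φ : List A → List A} (hΦ : PreservesOcc Φ)
include hΦ

theorem map_comp {f : A → A} (hf : Function.Injective f) : PreservesOcc (List.map f ∘ Φ) :=
  fun w v => (hΦ w v).trans (occ_map hf _ _).symm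

theorem reverse_comp : PreservesOcc (List.reverse ∘ Φ) :=
  fun w v => (hΦ w v).trans (occ_reverse _ _).symm

theorem infix_apply_of_infix {w v : List A} (h : w <:+: v) : Φ w <:+: Φ v :=
  occ_pos_iff_infix.1 (hΦ w v ▸ occ_pos_iff_infix.2 h)

theorem length_eq (hnil : Φ [] = []) (v : List A) : (Φ v).length = v.length := by
  have := hΦ [] v
  rw [hnil, occ_nil_left, occ_nil_left] at this
  omega

theorem perm (h1 : ∀ a, Φ [a] = [a]) (v : List A) : Φ v ~ v :=
  List.perm_iff_count.2 fun a => by rw [← occ_singleton, ← occ_singleton, hΦ [a] v, h1]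

theorem eq_self (hnil : Φ [] = []) (h1 : ∀ a, Φ [a] = [a])
    (h2 : ∀ a b, Φ [a, b] = [a, b]) (v : List A) : Φ v = v := by
  induction hn : v.length using Nat.strong_induction_on generalizing v with
  | _ n ih =>
  rcases v with _ | ⟨h, s⟩
  · exact hnil
  obtain ⟨p, l, hv⟩ := (List.eq_nil_or_concat' (h :: s)).resolve_left (List.cons_ne_nil h s)
  have hlen := congrArg List.length hv
  simp only [List.length_cons, List.length_append] at hlen hn
  have hp : Φ p = p := ih p.length (by omega) p rfl
  have hs : Φ s = s := ih s.length (by omega) s rfl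
  rw [hv]
  refine eq_of_perm_of_infix_of_occ_pair_eq hv (hΦ.perm h1 _) ?_ ?_ fun c d => ?_
  · simpa only [hp] using hΦ.infix_apply_of_infix (List.prefix_append p [l]).isInfix
  · have hsv : s <:+: p ++ [l] := hv ▸ (List.suffix_cons h s).isInfix
    simpa only [hs] using hΦ.infix_apply_of_infix hsv
  · rw [hΦ [c, d] (p ++ [l]), h2]

theorem pair_eq_or_eq_swap (h1 : ∀ a, Φ [a] = [a]) (a b : A) :
    Φ [a, b] = [a, b] ∨ Φ [a, b] = [b, a] :=
  List.perm_pair.1 (hΦ.perm h1 _)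

theorem pair_eq_of_pair_eq (hinj : Function.Injective Φ) (h1 : ∀ a, Φ [a] = [a]) {a b c : A}
    (hab : a ≠ b) (hbc : b ≠ c) (h : Φ [a, b] = [a, b]) : Φ [b, c] = [b, c] := by
  refine (hΦ.pair_eq_or_eq_swap h1 b c).resolve_right fun hcb => ?_
  have hW := List.eq_append_or_eq_cons_of_infix_of_perm
    (h ▸ hΦ.infix_apply_of_infix (⟨[], [c], rfl⟩ : [a, b] <:+: [a, b, c]))
    (hΦ.perm h1 [a, b, c])
  have hcb' := hcb ▸ hΦ.infix_apply_of_infix (⟨[a], [], rfl⟩ : [b, c] <:+: [a, b, c])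
  obtain rfl : c = a := by
    rcases hW with hW | hW <;> rw [hW] at hcb' <;> simp [List.infix_cons_iff] at hcb' <;> tauto
  exact hbc (by simpa using hinj (h.trans hcb.symm) : c = b ∧ b = c).2

theorem pairs_fixed_or_swapped (hinj : Function.Injective Φ) (h1 : ∀ a, Φ [a] = [a]) :
    (∀ a b, Φ [a, b] = [a, b]) ∨ ∀ a b, Φ [a, b] = [b, a] := by
  by_cases hex : ∃ a b, a ≠ b ∧ Φ [a, b] = [a, b]
  · obtain ⟨a, b, hab, h⟩ := hex
    left
    intro c d
    by_cases hcd : c = d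
    · subst hcd
      exact (hΦ.pair_eq_or_eq_swap h1 c c).elim id id
    by_cases hcb : c = b
    · subst hcb
      exact hΦ.pair_eq_of_pair_eq hinj h1 hab hcd h
    exact hΦ.pair_eq_of_pair_eq hinj h1 (Ne.symm hcb) hcd
      (hΦ.pair_eq_of_pair_eq hinj h1 hab (Ne.symm hcb) h)
  · push Not at hex
    right
    intro a b
    by_cases hab : a = b
    · subst hab
      exact (hΦ.pair_eq_or_eq_swap h1 a a).elim id id
    exact (hΦ.pair_eq_or_eq_swap h1 a b).resolve_left (hex a b hab)

theorem eq_id_or_eq_reverse (hinj : Function.Injective Φ) (hnil : Φ [] = [])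
    (h1 : ∀ a, Φ [a] = [a]) : (∀ v, Φ v = v) ∨ ∀ v, Φ v = v.reverse := by
  rcases hΦ.pairs_fixed_or_swapped hinj h1 with h2 | h2
  · exact Or.inl (hΦ.eq_self hnil h1 h2)
  · refine Or.inr fun v => ?_
    have := hΦ.reverse_comp.eq_self (by simp [hnil]) (by simp [h1]) (by simp [h2]) v
    simpa using congrArg List.reverse this

end PreservesOcc

section Symmetry

variable {A : Type*} [DecidableEq A] {Ψ : List A → List A}

theorem IsSymmetry.preservesOcc (hΨ : IsSymmetry Ψ) : PreservesOcc Ψ := hΨ.2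

theorem IsSymmetry.map_nil (hΨ : IsSymmetry Ψ) : Ψ [] = [] := by
  obtain ⟨v, hv⟩ := hΨ.1.2 []
  have := hΨ.2 [] v
  rw [hv, occ_nil_left, occ_nil_right] at this
  by_contra h
  rw [if_neg h] at this
  omega

theorem IsSymmetry.exists_perm (hΨ : IsSymmetry Ψ) :
    ∃ π : Equiv.Perm A, ∀ a, Ψ [a] = [π a] := by
  have hlen := hΨ.preservesOcc.length_eq hΨ.map_nil
  choose f hf using fun a : A => List.length_eq_one_iff.1 (hlen [a])
  have hsurj : Function.Surjective f := fun b => by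
    obtain ⟨v, hv⟩ := hΨ.1.2 [b]
    obtain ⟨a, rfl⟩ := List.length_eq_one_iff.1 ((hlen v).symm.trans (by simp [hv]))
    exact ⟨a, by simpa [hv] using (hf a).symm⟩
  have hinj : Function.Injective f := fun a b hab => by
    simpa using hΨ.1.1 (by rw [hf a, hf b, hab] : Ψ [a] = Ψ [b])
  exact ⟨Equiv.ofBijective f ⟨hinj, hsurj⟩, hf⟩

theorem IsSymmetry.eq_map_or_eq_reverse_map (hΨ : IsSymmetry Ψ) {π : Equiv.Perm A}
    (hπ : ∀ a, Ψ [a] = [π a]) :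
    (∀ v, Ψ v = v.map π) ∨ ∀ v, Ψ v = (v.map π).reverse := by
  have hΦ := hΨ.preservesOcc.map_comp π.symm.injective
  have hinj : Function.Injective (List.map π.symm ∘ Ψ) :=
    (List.map_injective_iff.2 π.symm.injective).comp hΨ.1.1
  have hback : ∀ v, Ψ v = (List.map π.symm (Ψ v)).map π := fun v => by simp [List.map_map]
  rcases hΦ.eq_id_or_eq_reverse hinj (by simp [hΨ.map_nil]) (by simp [hπ]) with h | h
  · exact Or.inl fun v => by rw [hback, ← Function.comp_apply (f := List.map π.symm), h]
  · exact Or.inr fun v => by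
      rw [hback, ← Function.comp_apply (f := List.map π.symm), h, List.map_reverse]

end Symmetry

section Morphisms

variable {A : Type*} {Ψ : List A → List A} {f : A → A}

theorem eq_map_of_morphism (hΨ : ∀ x y, Ψ (x ++ y) = Ψ x ++ Ψ y) (h1 : ∀ a, Ψ [a] = [f a])
    (v : List A) : Ψ v = v.map f := by
  induction v with
  | nil => simpa using hΨ [] []
  | cons a v ih => rw [← List.singleton_append, hΨ, h1, ih]; rfl

theorem eq_reverse_map_of_antimorphism (hΨ : ∀ x y, Ψ (x ++ y) = Ψ y ++ Ψ x)
    (h1 : ∀ a, Ψ [a] = [f a]) (v : List A) : Ψ v = (v.map f).reverse := by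
  have := eq_map_of_morphism (Ψ := List.reverse ∘ Ψ) (f := f) (fun x y => by simp [hΨ])
    (by simp [h1]) v
  simpa using congrArg List.reverse this

end Morphisms

theorem isSymmetry_map {A : Type*} [DecidableEq A] (π : Equiv.Perm A) : IsSymmetry (List.map π) :=
  ⟨List.map_bijective_iff.2 π.bijective, preservesOcc_id.map_comp π.injective⟩

theorem isSymmetry_reverse_map {A : Type*} [DecidableEq A] (π : Equiv.Perm A) :
    IsSymmetry fun v => (v.map π).reverse :=
  ⟨List.reverse_involutive.bijective.comp (List.map_bijective_iff.2 π.bijective),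
    (preservesOcc_id.map_comp π.injective).reverse_comp⟩

theorem symmetry_iff_general {A : Type*} [DecidableEq A] (Ψ : List A → List A) :
    IsSymmetry Ψ ↔
      (((∀ x y : List A, Ψ (x ++ y) = Ψ x ++ Ψ y) ∨
        (∀ x y : List A, Ψ (x ++ y) = Ψ y ++ Ψ x)) ∧
       ∃ π : Equiv.Perm A, ∀ a : A, Ψ [a] = [π a]) := by
  constructor
  · intro hΨ
    obtain ⟨π, hπ⟩ := hΨ.exists_perm
    refine ⟨?_, π, hπ⟩
    rcases hΨ.eq_map_or_eq_reverse_map hπ with h | h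
    · exact Or.inl fun x y => by simp [h]
    · exact Or.inr fun x y => by simp [h]
  · rintro ⟨hmorph | hanti, π, hπ⟩
    · rw [funext (eq_map_of_morphism hmorph hπ)]
      exact isSymmetry_map π
    · rw [funext (eq_reverse_map_of_antimorphism hanti hπ)]
      exact isSymmetry_reverse_map π

/-- A map `Ψ : A* → A*` is a symmetry if and only if it is a morphism or an antimorphism
whose restriction to the letters is a permutation of the alphabet. -/
theorem symmetry_iff {A : Type*} [Fintype A] [DecidableEq A] (Ψ : List A → List A) :
    IsSymmetry Ψ ↔
      (((∀ x y : List A, Ψ (x ++ y) = Ψ x ++ Ψ y) ∨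
        (∀ x y : List A, Ψ (x ++ y) = Ψ y ++ Ψ x)) ∧
       ∃ π : Equiv.Perm A, ∀ a : A, Ψ [a] = [π a]) :=
  symmetry_iff_general Ψ
end

section
/- The language of the generalized Thue-Morse word t_{b,m} is invariant under each morphism Π_x defined by Π_x(k) = x + k (mod m) for x ∈ Z_m: if w is a factor of t_{b,m}, then so is Π_x(w). -/
/-!
Writing `n` in base `b`, the fixed point satisfies `t n = t (n / b) + n % b`, so `t n` is the sum of
the base-`b` digits of `n` modulo `m`. Hence prepending the digits of `n` in front of a block of
`k` digits adds `t n` to every letter: `t (b ^ k * n + j) = t n + t j` for `j < b ^ k`. Shifting an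
occurrence of `w` at position `i` by `b ^ (i + |w|) * n` therefore yields an occurrence of
`Π_{t n} w`, and `t` takes every value of `ℤ/mℤ` since `t (b * n + 1) = t n + 1`.
-/

open Filter Topology

namespace isTM

variable {b m : ℕ} {u : ℕ → ZMod m}

theorem apply_pow_mul_add (hu : isTM b m u) :
    ∀ (k : ℕ) {t : ℕ}, t < b ^ k → ∀ n, u (b ^ k * n + t) = u n + u t
  | 0, t, ht, n => by
    obtain rfl : t = 0 := by simpa using ht
    simp [hu.1]
  | k + 1, t, ht, n => by
    have hb : 0 < b := Nat.pos_of_ne_zero (by rintro rfl; simp at ht)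
    have hdigit : t % b < b := Nat.mod_lt _ hb
    have hhigh : t / b < b ^ k := Nat.div_lt_of_lt_mul (by rwa [pow_succ'] at ht)
    have hsplit : b ^ (k + 1) * n + t = b * (b ^ k * n + t / b) + t % b := by
      rw [pow_succ', mul_assoc, mul_add, add_assoc, Nat.div_add_mod]
    rw [hsplit, hu.2 _ _ hdigit, hu.apply_pow_mul_add k hhigh,
      ← Nat.div_add_mod t b, hu.2 _ _ hdigit, Nat.div_add_mod]
    ring

theorem exists_apply_eq_natCast (hu : isTM b m u) (hb : 1 < b) (r : ℕ) :
    ∃ n, u n = (r : ZMod m) := by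
  induction r with
  | zero => exact ⟨0, by simp [hu.1]⟩
  | succ r ih =>
    obtain ⟨n, hn⟩ := ih
    exact ⟨b * n + 1, by rw [hu.2 n 1 hb, hn]; push_cast; ring⟩

theorem surjective [NeZero m] (hu : isTM b m u) (hb : 1 < b) : Function.Surjective u := by
  intro x
  obtain ⟨r, rfl⟩ := ZMod.natCast_zmod_surjective x
  exact hu.exists_apply_eq_natCast hb r

theorem isFactor_map_add (hu : isTM b m u) (hb : 1 < b) (n : ℕ) {w : List (ZMod m)}
    (hw : isFactor u w) : isFactor u (w.map (u n + ·)) := by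
  obtain ⟨i, hi⟩ := hw
  refine ⟨b ^ (i + w.length) * n + i, ?_⟩
  rw [List.length_map]
  conv_lhs => rw [hi]
  rw [List.map_map]
  refine List.map_congr_left fun j hj => ?_
  have hij : i + j < b ^ (i + w.length) :=
    (Nat.add_lt_add_left (List.mem_range.1 hj) i).trans (Nat.lt_pow_self hb)
  rw [Function.comp_apply, add_assoc, hu.apply_pow_mul_add _ hij]

end isTM

/-- The language of `t_{b,m}` is invariant under every morphism `Π_x : k ↦ x + k`. -/
theorem tm_invariant_Pi (b m : ℕ) (hb : 2 ≤ b) (hm : 1 ≤ m) (u : ℕ → ZMod m)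
    (hu : isTM b m u) (x : ZMod m) (w : List (ZMod m)) (hw : isFactor u w) :
    isFactor u (w.map (fun k => x + k)) := by
  have : NeZero m := ⟨by omega⟩
  obtain ⟨n, rfl⟩ := hu.surjective hb x
  exact hu.isFactor_map_add hb n hw
end

section
/- Let φ be a uniform marked primitive morphism with letter images of length b, with fixed point u. If v is a circular factor of u (i.e., v contains a synchronization point), then v admits a unique interpretation; moreover, if w is its unique ancestor, then ρ(v) = ρ(w)/b. -/
open Filter Topology

/-- Extension of a morphism `φ` (given by its letter images) to finite words. -/
def applyW {A : Type*} (φ : A → List A) (s : List A) : List A :=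
  s.flatMap φ

/-- Incidence matrix of a morphism on a finite alphabet. -/
def incid {A : Type*} [DecidableEq A] (φ : A → List A) : Matrix A A ℕ :=
  fun i j => (φ j).count i

/-- `(v.take p, v.drop p)` is a synchronization point of the factor `v` of `u`. -/
def SyncAtGen {A : Type*} (φ : A → List A) (u : ℕ → A) (v : List A) (p : ℕ) : Prop :=
  ∀ v₁ v₂ s : List A, isFactor u s → v₁ ++ v ++ v₂ = applyW φ s →
    ∃ s₁ s₂ : List A, s = s₁ ++ s₂ ∧
      v₁ ++ v.take p = applyW φ s₁ ∧ v.drop p ++ v₂ = applyW φ s₂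

/-- `(w, i, j)` is an interpretation of `v`: `w` is a nonempty factor of `u` and `v` is
obtained from `φ(w)` by erasing `i` letters from the left and `j` letters from the
right, with `i < |φ(w₀)| = b` and `j < |φ(w_k)| = b`. -/
def IsInterp {A : Type*} (φ : A → List A) (b : ℕ) (u : ℕ → A) (v : List A)
    (t : List A × ℕ × ℕ) : Prop :=
  t.1 ≠ [] ∧ isFactor u t.1 ∧ t.2.1 < b ∧ t.2.2 < b ∧
    ∃ x y : List A, x.length = t.2.1 ∧ y.length = t.2.2 ∧ applyW φ t.1 = x ++ v ++ y


section Aux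
variable {A : Type*}

/-- segment of u of length L starting at m -/
def seg {A : Type*} (u : ℕ → A) (m L : ℕ) : List A :=
  (List.range L).map (fun j => u (m + j))

variable {A : Type*}

@[simp] lemma seg_length (u : ℕ → A) (m L : ℕ) : (seg u m L).length = L := by
  simp [seg]

lemma seg_append (u : ℕ → A) (m L K : ℕ) :
    seg u m L ++ seg u (m + L) K = seg u m (L + K) := by
  simp only [seg, List.range_add, List.map_append, List.map_map]
  congr 1
  apply List.map_congr_left
  intro j _
  simp [Function.comp, Nat.add_assoc]

lemma seg_take (u : ℕ → A) (m L t : ℕ) : (seg u m L).take t = seg u m (min t L) := by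
  simp [seg, ← List.map_take, List.take_range]

lemma seg_drop (u : ℕ → A) (m L t : ℕ) : (seg u m L).drop t = seg u (m + t) (L - t) := by
  rcases le_or_gt t L with h | h
  · have : L = t + (L - t) := by omega
    rw [this, ← seg_append]
    simp [List.drop_left']
  · rw [List.drop_of_length_le (by simp; omega)]
    have : L - t = 0 := by omega
    simp [this, seg]

lemma isFactor_iff (u : ℕ → A) (w : List A) : isFactor u w ↔ ∃ m, w = seg u m w.length := by
  rfl

lemma pref_eq_seg (u : ℕ → A) (n : ℕ) : pref u n = seg u 0 n := by
  simp [pref, seg]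

@[simp] lemma applyW_nil (φ : A → List A) : applyW φ ([] : List A) = [] := rfl

@[simp] lemma applyW_append (φ : A → List A) (s t : List A) :
    applyW φ (s ++ t) = applyW φ s ++ applyW φ t := by
  simp [applyW]

@[simp] lemma applyW_cons (φ : A → List A) (a : A) (s : List A) :
    applyW φ (a :: s) = φ a ++ applyW φ s := by
  simp [applyW]

@[simp] lemma applyW_concat (φ : A → List A) (s : List A) (a : A) :
    applyW φ (s ++ [a]) = applyW φ s ++ φ a := by
  simp [applyW]

lemma applyW_length {φ : A → List A} {b : ℕ} (hunif : ∀ a : A, (φ a).length = b)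
    (s : List A) : (applyW φ s).length = b * s.length := by
  induction s with
  | nil => simp
  | cons a s ih => simp [ih, hunif a, Nat.mul_add, Nat.mul_succ]; ring

lemma applyW_seg {φ : A → List A} {b : ℕ} {u : ℕ → A}
    (hfix : ∀ n : ℕ, (List.range b).map (fun i => u (b * n + i)) = φ (u n))
    (m L : ℕ) : applyW φ (seg u m L) = seg u (b * m) (b * L) := by
  induction L with
  | zero => simp [seg]
  | succ L ih =>
    have h1 : seg u m (L + 1) = seg u m L ++ seg u (m + L) 1 := (seg_append u m L 1).symm
    rw [h1, applyW_append]
    have h2 : seg u (m + L) 1 = [u (m + L)] := by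
      show List.map _ (List.range 1) = _
      rw [List.range_succ]; simp
    have h3 : applyW φ [u (m + L)] = φ (u (m + L)) := by simp [applyW]
    rw [h2, h3, ← hfix (m + L), ih]
    have : (List.range b).map (fun i => u (b * (m + L) + i)) = seg u (b * m + b * L) b := by
      simp [seg, Nat.mul_add]
    rw [this, seg_append, Nat.mul_add]
    norm_num [Nat.mul_succ, Nat.mul_add]

variable {b : ℕ} {φ : A → List A}

lemma phi_ne_nil (hb : 2 ≤ b) (hunif : ∀ a : A, (φ a).length = b) (a : A) : φ a ≠ [] := by
  intro h
  have := hunif a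
  rw [h] at this
  simp at this
  omega

lemma length_eq_of_marked {s s' : List A} {x x' P : List A}
    (hb : 2 ≤ b) (hunif : ∀ a : A, (φ a).length = b)
    (hx : x.length < b) (hx' : x'.length < b)
    (h : x ++ P = applyW φ s) (h' : x' ++ P = applyW φ s') : s.length = s'.length := by
  have l1 : x.length + P.length = b * s.length := by
    have := congrArg List.length h
    simpa [applyW_length hunif] using this
  have l2 : x'.length + P.length = b * s'.length := by
    have := congrArg List.length h'
    simpa [applyW_length hunif] using this
  by_contra hne
  rcases Nat.lt_or_ge s.length s'.length with h1 | h1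
  · have : b * s.length + b ≤ b * s'.length := by
      have : s.length + 1 ≤ s'.length := h1
      calc b * s.length + b = b * (s.length + 1) := by ring
        _ ≤ b * s'.length := Nat.mul_le_mul_left b this
    omega
  · have h1' : s'.length < s.length := by omega
    have : b * s'.length + b ≤ b * s.length := by
      have : s'.length + 1 ≤ s.length := h1'
      calc b * s'.length + b = b * (s'.length + 1) := by ring
        _ ≤ b * s.length := Nat.mul_le_mul_left b this
    omega

lemma marked_suffix (hb : 2 ≤ b) (hunif : ∀ a : A, (φ a).length = b)
    (hmarked : ∀ a a' : A, a ≠ a' →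
      (φ a).head? ≠ (φ a').head? ∧ (φ a).getLast? ≠ (φ a').getLast?) :
    ∀ n (s s' x x' P : List A), s.length = n →
      x.length < b → x'.length < b →
      x ++ P = applyW φ s → x' ++ P = applyW φ s' → s = s' := by
  intro n
  induction n with
  | zero =>
    intro s s' x x' P hn hx hx' h h'
    have hlen : s'.length = 0 := by
      have := length_eq_of_marked hb hunif hx hx' h h'
      omega
    rw [List.eq_nil_of_length_eq_zero hn, List.eq_nil_of_length_eq_zero hlen]
  | succ n ih =>
    intro s s' x x' P hn hx hx' h h'
    have hlen : s'.length = n + 1 := by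
      have := length_eq_of_marked hb hunif hx hx' h h'
      omega
    rcases List.eq_nil_or_concat s with rfl | ⟨c, a, rfl⟩
    · simp at hn
    rcases List.eq_nil_or_concat s' with rfl | ⟨c', a', rfl⟩
    · simp at hlen
    simp only [List.concat_eq_append] at *
    have hclen : c.length = n := by simpa using hn
    have hc'len : c'.length = n := by simpa using hlen
    have hPlen : x.length + P.length = b * n + b := by
      have := congrArg List.length h
      simpa [applyW_length hunif, hclen, hunif] using this
    have hPne : P ≠ [] := by
      intro hP
      subst hP
      simp at hPlen
      omega
    -- last letters agree
    have hlast : (φ a).getLast? = (φ a').getLast? := by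
      have e1 : (x ++ P).getLast? = P.getLast? := by
        rw [List.getLast?_append]
        cases hl : P.getLast? with
        | none => exact absurd (List.getLast?_eq_none_iff.mp hl) hPne
        | some z => rfl
      have e2 : (applyW φ (c ++ [a])).getLast? = (φ a).getLast? := by
        rw [applyW_concat, List.getLast?_append]
        cases hl : (φ a).getLast? with
        | none => exact absurd (List.getLast?_eq_none_iff.mp hl) (phi_ne_nil hb hunif a)
        | some z => rfl
      have e3 : (applyW φ (c' ++ [a'])).getLast? = (φ a').getLast? := by
        rw [applyW_concat, List.getLast?_append]
        cases hl : (φ a').getLast? with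
        | none => exact absurd (List.getLast?_eq_none_iff.mp hl) (phi_ne_nil hb hunif a')
        | some z => rfl
      have e1' : (x' ++ P).getLast? = P.getLast? := by
        rw [List.getLast?_append]
        cases hl : P.getLast? with
        | none => exact absurd (List.getLast?_eq_none_iff.mp hl) hPne
        | some z => rfl
      rw [← e2, ← h, e1, ← e1', h', e3]
    have haa' : a = a' := by
      by_contra hne
      exact (hmarked a a' hne).2 hlast
    subst haa'
    rcases Nat.eq_zero_or_pos n with hn0 | hn0
    · have : c = [] := List.eq_nil_of_length_eq_zero (by omega)
      have : c' = [] := List.eq_nil_of_length_eq_zero (by omega)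
      simp_all
    -- n ≥ 1 : P has length ≥ b, peel last block
    have hPb : b ≤ P.length := by
      have hbn : b ≤ b * n := Nat.le_mul_of_pos_right b hn0
      omega
    set P₁ := P.take (P.length - b) with hP₁
    set P₂ := P.drop (P.length - b) with hP₂
    have hP12 : P = P₁ ++ P₂ := (List.take_append_drop _ P).symm
    have hP₂len : P₂.length = b := by simp [hP₂]; omega
    have key : x ++ P₁ = applyW φ c ∧ P₂ = φ a := by
      apply List.append_inj'
      · rw [List.append_assoc, ← hP12, h, applyW_concat]
      · rw [hP₂len, hunif]
    have key' : x' ++ P₁ = applyW φ c' ∧ P₂ = φ a := by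
      apply List.append_inj'
      · rw [List.append_assoc, ← hP12, h', applyW_concat]
      · rw [hP₂len, hunif]
    have : c = c' := ih c c' x x' P₁ hclen hx hx' key.1 key'.1
    rw [this]

lemma marked_prefix (hb : 2 ≤ b) (hunif : ∀ a : A, (φ a).length = b)
    (hmarked : ∀ a a' : A, a ≠ a' →
      (φ a).head? ≠ (φ a').head? ∧ (φ a).getLast? ≠ (φ a').getLast?) :
    ∀ n (s s' y y' P : List A), s.length = n →
      y.length < b → y'.length < b →
      P ++ y = applyW φ s → P ++ y' = applyW φ s' → s = s' := by
  intro n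
  induction n with
  | zero =>
    intro s s' y y' P hn hy hy' h h'
    have hs : s = [] := List.eq_nil_of_length_eq_zero hn
    subst hs
    simp only [applyW_nil] at h
    have hP : P.length = 0 ∧ y.length = 0 := by
      have := congrArg List.length h
      simp only [List.length_append, List.length_nil] at this
      omega
    have hl2 : P.length + y'.length = b * s'.length := by
      have := congrArg List.length h'
      simpa [applyW_length hunif] using this
    have : s'.length = 0 := by
      by_contra hne
      have h1 : 1 ≤ s'.length := Nat.one_le_iff_ne_zero.mpr hne
      have : b * 1 ≤ b * s'.length := Nat.mul_le_mul_left b h1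
      omega
    rw [List.eq_nil_of_length_eq_zero this]
  | succ n ih =>
    intro s s' y y' P hn hy hy' h h'
    have hlen : s'.length = n + 1 := by
      have l1 : P.length + y.length = b * s.length := by
        have := congrArg List.length h
        simpa [applyW_length hunif] using this
      have l2 : P.length + y'.length = b * s'.length := by
        have := congrArg List.length h'
        simpa [applyW_length hunif] using this
      rw [hn] at l1
      by_contra hne
      rcases Nat.lt_or_ge s'.length (n + 1) with h1 | h1
      · have : b * s'.length + b ≤ b * (n + 1) := by
          calc b * s'.length + b = b * (s'.length + 1) := by ring
            _ ≤ b * (n + 1) := Nat.mul_le_mul_left b h1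
        omega
      · have h1' : n + 1 < s'.length := by omega
        have : b * (n + 1) + b ≤ b * s'.length := by
          calc b * (n + 1) + b = b * (n + 1 + 1) := by ring
            _ ≤ b * s'.length := Nat.mul_le_mul_left b h1'
        omega
    rcases s with _ | ⟨a, c⟩
    · simp at hn
    rcases s' with _ | ⟨a', c'⟩
    · simp at hlen
    have hclen : c.length = n := by simpa using hn
    have hc'len : c'.length = n := by simpa using hlen
    have hPlen : P.length + y.length = b * n + b := by
      have := congrArg List.length h
      have h2 := applyW_length hunif c
      simp [applyW_length hunif, hclen, hunif] at this
      omega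
    have hPne : P ≠ [] := by
      intro hP
      subst hP
      simp at hPlen
      omega
    have hhead : (φ a).head? = (φ a').head? := by
      have e1 : (P ++ y).head? = P.head? := by
        rw [List.head?_append]
        cases hl : P.head? with
        | none => exact absurd (List.head?_eq_none_iff.mp hl) hPne
        | some z => rfl
      have e2 : (applyW φ (a :: c)).head? = (φ a).head? := by
        rw [applyW_cons, List.head?_append]
        cases hl : (φ a).head? with
        | none => exact absurd (List.head?_eq_none_iff.mp hl) (phi_ne_nil hb hunif a)
        | some z => rfl
      have e3 : (applyW φ (a' :: c')).head? = (φ a').head? := by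
        rw [applyW_cons, List.head?_append]
        cases hl : (φ a').head? with
        | none => exact absurd (List.head?_eq_none_iff.mp hl) (phi_ne_nil hb hunif a')
        | some z => rfl
      have e1' : (P ++ y').head? = P.head? := by
        rw [List.head?_append]
        cases hl : P.head? with
        | none => exact absurd (List.head?_eq_none_iff.mp hl) hPne
        | some z => rfl
      rw [← e2, ← h, e1, ← e1', h', e3]
    have haa' : a = a' := by
      by_contra hne
      exact (hmarked a a' hne).1 hhead
    subst haa'
    rcases Nat.eq_zero_or_pos n with hn0 | hn0
    · have hc : c = [] := List.eq_nil_of_length_eq_zero (by omega)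
      have hc' : c' = [] := List.eq_nil_of_length_eq_zero (by omega)
      simp_all
    have hPb : b ≤ P.length := by
      have hbn : b ≤ b * n := Nat.le_mul_of_pos_right b hn0
      omega
    set P₂ := P.take b with hP₂
    set P₁ := P.drop b with hP₁
    have hP12 : P = P₂ ++ P₁ := (List.take_append_drop _ P).symm
    have hP₂len : P₂.length = b := by simp [hP₂]; omega
    have key : P₂ = φ a ∧ P₁ ++ y = applyW φ c := by
      apply List.append_inj
      · rw [← List.append_assoc, ← hP12, h, applyW_cons]
      · rw [hP₂len, hunif]
    have key' : P₂ = φ a ∧ P₁ ++ y' = applyW φ c' := by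
      apply List.append_inj
      · rw [← List.append_assoc, ← hP12, h', applyW_cons]
      · rw [hP₂len, hunif]
    have : c = c' := ih c c' y y' P₁ hclen hy hy' key.2 key'.2
    rw [this]

variable {b : ℕ} {φ : A → List A} {u : ℕ → A} {v : List A}

lemma canonical_interp (hb : 2 ≤ b)
    (hfix : ∀ n : ℕ, (List.range b).map (fun i => u (b * n + i)) = φ (u n))
    (hvne : v ≠ []) (q : ℕ) (hq : v = seg u q v.length) :
    IsInterp φ b u v (seg u (q / b) ((q + v.length - 1) / b + 1 - q / b), q % b,
      b * ((q + v.length - 1) / b + 1) - (q + v.length)) := by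
  have hb0 : 0 < b := by omega
  have hV : 1 ≤ v.length := List.length_pos_iff.mpr hvne
  set V := v.length with hVdef
  set n₀ := q / b with hn₀
  set r := q % b with hr
  set n₁ := (q + V - 1) / b with hn₁
  have hq1 : b * n₀ + r = q := Nat.div_add_mod q b
  have hrb : r < b := Nat.mod_lt q hb0
  have hq2 : b * n₁ ≤ q + V - 1 := by
    rw [hn₁, mul_comm]; exact Nat.div_mul_le_self _ _
  have hq3 : q + V - 1 < b * n₁ + b := by
    have h1 := Nat.div_add_mod (q + V - 1) b
    rw [← hn₁] at h1
    have h2 : (q + V - 1) % b < b := Nat.mod_lt _ hb0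
    omega
  have hn₀₁ : n₀ ≤ n₁ := Nat.div_le_div_right (by omega)
  obtain ⟨L, hL⟩ : ∃ L, n₁ + 1 = n₀ + L := ⟨n₁ + 1 - n₀, by omega⟩
  have hL1 : 1 ≤ L := by omega
  have hbL : b * (n₁ + 1) = b * n₀ + b * L := by rw [hL, Nat.mul_add]
  have hmulsucc : b * (n₁ + 1) = b * n₁ + b := by ring
  have hLeq : (q + V - 1) / b + 1 - q / b = L := by omega
  set j := b * (n₁ + 1) - (q + V) with hj
  have hqV : q + V ≤ b * (n₁ + 1) := by omega
  have hjb : j < b := by omega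
  refine ⟨?_, ⟨n₀, by rw [seg_length]; rfl⟩, by rw [hLeq]; exact hrb, ?_, ?_⟩
  · rw [hLeq]
    intro hnil
    have := congrArg List.length hnil
    simp at this
    omega
  · show b * ((q + V - 1) / b + 1) - (q + V) < b
    exact hjb
  · refine ⟨seg u (b * n₀) r, seg u (q + V) j, by simp, by simp, ?_⟩
    show applyW φ (seg u n₀ ((q + V - 1) / b + 1 - n₀)) = _
    rw [hLeq, applyW_seg hfix]
    have hv' : v = seg u (b * n₀ + r) V := by rw [hq1]; exact hq
    rw [hv']
    have hy : seg u (q + V) j = seg u (b * n₀ + r + V) j := by rw [hq1]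
    rw [hy, List.append_assoc, seg_append, seg_append]
    congr 1
    omega

lemma interp_unique (hb : 2 ≤ b) (hunif : ∀ a : A, (φ a).length = b)
    (hmarked : ∀ a a' : A, a ≠ a' →
      (φ a).head? ≠ (φ a').head? ∧ (φ a).getLast? ≠ (φ a').getLast?)
    (hcirc : ∃ p : ℕ, p ≤ v.length ∧ SyncAtGen φ u v p)
    {t t' : List A × ℕ × ℕ}
    (ht : IsInterp φ b u v t) (ht' : IsInterp φ b u v t') : t = t' := by
  obtain ⟨p, _, hsync⟩ := hcirc
  obtain ⟨w, i, jj⟩ := t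
  obtain ⟨w', i', jj'⟩ := t'
  obtain ⟨hne, hfac, hi, hj, x, y, hx, hy, heq⟩ := ht
  obtain ⟨hne', hfac', hi', hj', x', y', hx', hy', heq'⟩ := ht'
  dsimp only at hne hfac hi hj hx hy heq hne' hfac' hi' hj' hx' hy' heq'
  obtain ⟨s₁, s₂, hw, h1, h2⟩ := hsync x y w hfac heq.symm
  obtain ⟨s₁', s₂', hw', h1', h2'⟩ := hsync x' y' w' hfac' heq'.symm
  have hs₁ : s₁ = s₁' :=
    marked_suffix hb hunif hmarked s₁.length s₁ s₁' x x' (v.take p) rfl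
      (by omega) (by omega) h1 h1'
  have hs₂ : s₂ = s₂' :=
    marked_prefix hb hunif hmarked s₂.length s₂ s₂' y y' (v.drop p) rfl
      (by omega) (by omega) h2 h2'
  have hxx : x = x' := by
    rw [hs₁] at h1
    have := h1.trans h1'.symm
    exact (List.append_inj' this rfl).1
  have hyy : y = y' := by
    rw [hs₂] at h2
    have := h2.trans h2'.symm
    exact (List.append_inj this rfl).2
  have hww : w = w' := by rw [hw, hw', hs₁, hs₂]
  simp only [Prod.mk.injEq]
  exact ⟨hww, by rw [← hx, ← hx', hxx], by rw [← hy, ← hy', hyy]⟩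

@[simp] lemma pref_length (u : ℕ → A) (n : ℕ) : (pref u n).length = n := by simp [pref]

/-- number of occurrences of `w` in `u` starting at a position `< M` -/
def cnt [DecidableEq A] (u : ℕ → A) (w : List A) (M : ℕ) : ℕ :=
  ((Finset.range M).filter (fun q => seg u q w.length = w)).card

lemma countP_range (p : ℕ → Bool) (M : ℕ) :
    (List.range M).countP p = ((Finset.range M).filter (fun q => p q = true)).card := by
  induction M with
  | zero => simp
  | succ M ih =>
    rw [List.range_succ, List.countP_append, ih, Finset.range_add_one, Finset.filter_insert]
    by_cases h : p M = true
    · rw [if_pos h, Finset.card_insert_of_notMem (by simp)]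
      simp [List.countP_cons, h]
    · rw [if_neg h]
      simp [List.countP_cons, h]

lemma occ_eq_cnt [DecidableEq A] (u : ℕ → A) (w : List A) (hw : w ≠ []) (N : ℕ) :
    occ w (pref u N) = cnt u w (N + 1 - w.length) := by
  have hW : 1 ≤ w.length := List.length_pos_iff.mpr hw
  rw [occ, pref_length, countP_range, cnt]
  congr 1
  ext q
  simp only [Finset.mem_filter, Finset.mem_range, decide_eq_true_eq]
  rw [pref_eq_seg, seg_drop, seg_take, Nat.zero_add]
  constructor
  · rintro ⟨hq, hseg⟩
    have hlen := congrArg List.length hseg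
    simp only [seg_length] at hlen
    have hmin : min w.length (N - q) = w.length := hlen
    have h1 : w.length ≤ N - q := by omega
    have h2 : q + w.length ≤ N := by omega
    exact ⟨by omega, by rwa [hmin] at hseg⟩
  · rintro ⟨hq, hseg⟩
    have h2 : q + w.length ≤ N := by omega
    have hmin : min w.length (N - q) = w.length := by omega
    exact ⟨by omega, by rwa [hmin]⟩

lemma cnt_shift [DecidableEq A] (u : ℕ → A) (v w : List A) (b i : ℕ) (hb : 0 < b)
    (hocc : ∀ q, seg u q v.length = v ↔ ∃ m, q = b * m + i ∧ seg u m w.length = w)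
    (K M : ℕ) (hKM : ∀ m, b * m + i < K ↔ m < M) :
    cnt u v K = cnt u w M := by
  refine (Finset.card_bij (fun m _ => b * m + i) ?_ ?_ ?_).symm
  · intro m hm
    simp only [Finset.mem_filter, Finset.mem_range] at hm ⊢
    exact ⟨(hKM m).2 hm.1, (hocc _).2 ⟨m, rfl, hm.2⟩⟩
  · intro m₁ h₁ m₂ h₂ he
    have : b * m₁ = b * m₂ := by omega
    exact Nat.eq_of_mul_eq_mul_left hb this
  · intro q hq
    simp only [Finset.mem_filter, Finset.mem_range] at hq
    obtain ⟨m, rfl, hm⟩ := (hocc q).1 hq.2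
    refine ⟨m, ?_, rfl⟩
    simp only [Finset.mem_filter, Finset.mem_range]
    exact ⟨(hKM m).1 hq.1, hm⟩

lemma cnt_tendsto [DecidableEq A] (u : ℕ → A) (w : List A) (hw : w ≠ []) (x : ℝ)
    (hfreq : Filter.Tendsto (fun n => (occ w (pref u n) : ℝ) / n) Filter.atTop (nhds x)) :
    Filter.Tendsto (fun M => (cnt u w M : ℝ) / M) Filter.atTop (nhds x) := by
  have hW : 1 ≤ w.length := List.length_pos_iff.mpr hw
  set c := w.length - 1 with hc
  have h1 : Filter.Tendsto (fun M : ℕ => M + c) Filter.atTop Filter.atTop :=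
    Filter.tendsto_atTop_mono (fun M => Nat.le_add_right M c) Filter.tendsto_id
  have h2 := hfreq.comp h1
  have h3 : Filter.Tendsto (fun M : ℕ => ((M + c : ℕ) : ℝ) / M) Filter.atTop (nhds 1) := by
    have hbase : Filter.Tendsto (fun M : ℕ => 1 + (c : ℝ) / M) Filter.atTop (nhds (1 + 0)) :=
      tendsto_const_nhds.add (tendsto_const_div_atTop_nhds_zero_nat (c : ℝ))
    rw [add_zero] at hbase
    apply hbase.congr'
    filter_upwards [Filter.eventually_ge_atTop 1] with M hM
    have hM0 : (M : ℝ) ≠ 0 := Nat.cast_ne_zero.mpr (by omega)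
    push_cast
    field_simp
  have h4 := h2.mul h3
  rw [mul_one] at h4
  apply h4.congr'
  filter_upwards [Filter.eventually_ge_atTop 1] with M hM
  have hMc : (0:ℝ) < ((M + c : ℕ) : ℝ) := by
    have : 1 ≤ M + c := by omega
    exact_mod_cast Nat.lt_of_lt_of_le Nat.zero_lt_one this
  have hM0 : (M : ℝ) ≠ 0 := Nat.cast_ne_zero.mpr (by omega)
  have hcnt : cnt u w M = occ w (pref u (M + c)) := by
    rw [occ_eq_cnt u w hw (M + c)]
    congr 1
    omega
  show (occ w (pref u (M + c)) : ℝ) / (M + c : ℕ) * (((M + c : ℕ) : ℝ) / M)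
      = (cnt u w M : ℝ) / M
  rw [hcnt, div_mul_div_comm, mul_comm ((occ w (pref u (M + c)) : ℝ)) (((M + c : ℕ) : ℝ)),
    mul_div_mul_left _ _ hMc.ne']

lemma M_bounds (b c : ℕ) (hb : 2 ≤ b) (n : ℕ) :
    n - c ≤ b * ((n - c) / b + 1) ∧ b * ((n - c) / b + 1) ≤ (n - c) + b := by
  have h1 := Nat.div_add_mod (n - c) b
  have h2 : (n - c) % b < b := Nat.mod_lt _ (by omega)
  have h3 : b * ((n - c) / b + 1) = b * ((n - c) / b) + b := by ring
  omega

lemma ratio_tendsto (b c : ℕ) (hb : 2 ≤ b) :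
    Filter.Tendsto (fun n : ℕ => (((n - c) / b + 1 : ℕ) : ℝ) / n) Filter.atTop
      (nhds (1 / b)) := by
  have hb0 : (0:ℝ) < (b:ℝ) := by exact_mod_cast Nat.lt_of_lt_of_le Nat.zero_lt_two hb
  have hlow : Filter.Tendsto (fun n : ℕ => 1 / (b:ℝ) - ((c : ℝ) / b) / n) Filter.atTop
      (nhds (1 / b - 0)) :=
    tendsto_const_nhds.sub (tendsto_const_div_atTop_nhds_zero_nat ((c : ℝ) / b))
  rw [sub_zero] at hlow
  have hup : Filter.Tendsto (fun n : ℕ => 1 / (b:ℝ) + 1 / n) Filter.atTop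
      (nhds (1 / b + 0)) :=
    tendsto_const_nhds.add (tendsto_const_div_atTop_nhds_zero_nat 1)
  rw [add_zero] at hup
  apply tendsto_of_tendsto_of_tendsto_of_le_of_le' hlow hup
  · filter_upwards [Filter.eventually_ge_atTop (c + 1)] with n hn
    have hn0 : (0:ℝ) < (n:ℝ) := by exact_mod_cast Nat.lt_of_lt_of_le Nat.zero_lt_one (by omega)
    have hkey : (n : ℝ) - c ≤ (b : ℝ) * ((((n - c) / b + 1 : ℕ)) : ℝ) := by
      have h := (M_bounds b c hb n).1
      have hcast : ((n - c : ℕ) : ℝ) = (n : ℝ) - c := by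
        have : c ≤ n := by omega
        push_cast [this]
        ring
      calc (n:ℝ) - c = ((n - c : ℕ) : ℝ) := hcast.symm
        _ ≤ ((b * ((n - c) / b + 1) : ℕ) : ℝ) := by exact_mod_cast h
        _ = (b : ℝ) * ((((n - c) / b + 1 : ℕ)) : ℝ) := by push_cast; ring
    calc 1 / (b:ℝ) - ((c : ℝ) / b) / n = ((n:ℝ) - c) / ((b:ℝ) * n) := by
          field_simp
          try ring
      _ ≤ ((b : ℝ) * ((((n - c) / b + 1 : ℕ)) : ℝ)) / ((b:ℝ) * n) :=
          div_le_div_of_nonneg_right hkey (by positivity)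
      _ = (((n - c) / b + 1 : ℕ) : ℝ) / n := mul_div_mul_left _ _ hb0.ne'
  · filter_upwards [Filter.eventually_ge_atTop (c + 1)] with n hn
    have hn0 : (0:ℝ) < (n:ℝ) := by exact_mod_cast Nat.lt_of_lt_of_le Nat.zero_lt_one (by omega)
    have hkey : (b : ℝ) * ((((n - c) / b + 1 : ℕ)) : ℝ) ≤ (n : ℝ) + b := by
      have h := (M_bounds b c hb n).2
      have h2 : b * ((n - c) / b + 1) ≤ n + b := by omega
      calc (b : ℝ) * ((((n - c) / b + 1 : ℕ)) : ℝ)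
          = ((b * ((n - c) / b + 1) : ℕ) : ℝ) := by push_cast; ring
        _ ≤ ((n + b : ℕ) : ℝ) := by exact_mod_cast h2
        _ = (n : ℝ) + b := by push_cast; ring
    calc (((n - c) / b + 1 : ℕ) : ℝ) / n
        = ((b : ℝ) * ((((n - c) / b + 1 : ℕ)) : ℝ)) / ((b:ℝ) * n) :=
          (mul_div_mul_left _ _ hb0.ne').symm
      _ ≤ ((n : ℝ) + b) / ((b:ℝ) * n) :=
          div_le_div_of_nonneg_right hkey (by positivity)
      _ = 1 / (b:ℝ) + 1 / n := by
          field_simp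
          try ring

end Aux

/-- A circular factor `v` of the fixed point of a uniform marked primitive morphism
has a unique interpretation, and if `w` is its unique ancestor then `ρ(v) = ρ(w)/b`. -/
theorem circular_unique_interpretation {A : Type*} [Fintype A] [DecidableEq A]
    (φ : A → List A) (b : ℕ) (hb : 2 ≤ b)
    (hunif : ∀ a : A, (φ a).length = b)
    (hmarked : ∀ a a' : A, a ≠ a' →
      (φ a).head? ≠ (φ a').head? ∧ (φ a).getLast? ≠ (φ a').getLast?)
    (hprim : ∃ k : ℕ, ∀ i j : A, 0 < ((incid φ) ^ k) i j)
    (u : ℕ → A) (hfix : ∀ n : ℕ, (List.range b).map (fun i => u (b * n + i)) = φ (u n))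
    (v : List A) (hv : isFactor u v) (hvne : v ≠ [])
    (hcirc : ∃ p : ℕ, p ≤ v.length ∧ SyncAtGen φ u v p) :
    (∃! t : List A × ℕ × ℕ, IsInterp φ b u v t) ∧
    (∀ w : List A, ∀ i j : ℕ, IsInterp φ b u v (w, i, j) →
      ∀ x : ℝ, freq u w x → freq u v (x / b)) := by
  have hb0 : 0 < b := by omega
  have hV : 1 ≤ v.length := List.length_pos_iff.mpr hvne
  obtain ⟨q₀, hq₀⟩ := hv
  have hq₀' : v = seg u q₀ v.length := hq₀
  have hcan := canonical_interp hb hfix hvne q₀ hq₀'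
  have huniq : ∃! t : List A × ℕ × ℕ, IsInterp φ b u v t :=
    ⟨_, hcan, fun t' ht' => interp_unique hb hunif hmarked hcirc ht' hcan⟩
  refine ⟨huniq, ?_⟩
  intro w i j hwij x hfreq
  have hwij' := hwij
  have hwne : w ≠ [] := hwij.1
  have hW : 1 ≤ w.length := List.length_pos_iff.mpr hwne
  obtain ⟨-, -, hi, hj, xx, yy, hxx, hyy, heq⟩ := hwij
  dsimp only at hi hj hxx hyy heq
  -- characterization of occurrences of v
  have hocc : ∀ q, seg u q v.length = v ↔ ∃ m, q = b * m + i ∧ seg u m w.length = w := by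
    intro q
    constructor
    · intro hq
      have hc := canonical_interp hb hfix hvne q hq.symm
      have hEq := interp_unique hb hunif hmarked hcirc hc hwij'
      simp only [Prod.mk.injEq] at hEq
      obtain ⟨hw1, hi1, hj1⟩ := hEq
      refine ⟨q / b, ?_, ?_⟩
      · rw [← hi1]
        exact (Nat.div_add_mod q b).symm
      · have hlw : w.length = (q + v.length - 1) / b + 1 - q / b := by
          rw [← hw1, seg_length]
        rw [hlw]
        exact hw1
    · rintro ⟨m, rfl, hm⟩
      have happ : seg u (b * m) (b * w.length) = xx ++ v ++ yy := by
        rw [← applyW_seg hfix, hm, heq]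
      have hlen2 : b * w.length = i + v.length + j := by
        have h6 := congrArg List.length heq
        rw [applyW_length hunif] at h6
        simp only [List.length_append, hxx, hyy] at h6
        omega
      have h7 := congrArg (fun l => (l.drop i).take v.length) happ
      rw [seg_drop, seg_take, List.append_assoc, ← hxx, List.drop_left,
        List.take_left' rfl] at h7
      rw [hxx] at h7
      rwa [show min v.length (b * w.length - i) = v.length by omega] at h7
  -- counting
  set c := i + v.length with hc
  set M : ℕ → ℕ := fun n => (n - c) / b + 1 with hM
  have hocceq : ∀ n, c ≤ n → occ v (pref u n) = cnt u w (M n) := by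
    intro n hn
    rw [occ_eq_cnt u v hvne n]
    apply cnt_shift u v w b i hb0 hocc
    intro m
    have hcomm : b * m = m * b := Nat.mul_comm b m
    constructor
    · intro h
      have h8 : m * b ≤ n - c := by omega
      have h9 : m ≤ (n - c) / b := (Nat.le_div_iff_mul_le hb0).mpr h8
      simp only [hM]
      omega
    · intro h
      simp only [hM] at h
      have h9 : m ≤ (n - c) / b := by omega
      have h8 : m * b ≤ n - c := (Nat.le_div_iff_mul_le hb0).mp h9
      omega
  have hcnt := cnt_tendsto u w hwne x hfreq
  have htM : Filter.Tendsto M Filter.atTop Filter.atTop := by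
    rw [Filter.tendsto_atTop_atTop]
    intro K
    refine ⟨c + b * K, fun n hn => ?_⟩
    have h8 : K * b ≤ n - c := by
      have : b * K = K * b := Nat.mul_comm b K
      omega
    have h9 : K ≤ (n - c) / b := (Nat.le_div_iff_mul_le hb0).mpr h8
    simp only [hM]
    omega
  have hrat := ratio_tendsto b c hb
  have hprod := (hcnt.comp htM).mul hrat
  rw [mul_one_div] at hprod
  show Filter.Tendsto (fun n => (occ v (pref u n) : ℝ) / n) Filter.atTop (nhds (x / b))
  apply hprod.congr'
  filter_upwards [Filter.eventually_ge_atTop (c + 1)] with n hn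
  have hMn1 : 1 ≤ M n := Nat.le_add_left 1 _
  have hMne : ((M n : ℕ) : ℝ) ≠ 0 := Nat.cast_ne_zero.mpr (by omega)
  show (cnt u w (M n) : ℝ) / (M n) * (((M n : ℕ) : ℝ) / n) = (occ v (pref u n) : ℝ) / n
  rw [hocceq n (by omega), div_mul_div_comm,
    mul_comm ((cnt u w (M n) : ℕ) : ℝ) ((M n : ℕ) : ℝ), mul_div_mul_left _ _ hMne]
end
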